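/- arXiv:1208.0778 — 5 statements merged into one kernel-verified Lean document; each statement's English description precedes it below -/
import Mathlib

section
/- For every rational function p over ℝ that is proper (i.e., p(∞) = 0, equivalently the degree of the numerator of p is strictly less than the degree of its denominator, with p written in lowest terms), there exist a positive integer n and real matrices A of size n×n, B of size n×1, and C of size 1×n such that for every z ∈ ℂ with det(zI − A) ≠ 0, p(z) equals the unique entry of the 1×1 matrix C(zI − A)⁻¹B. -/
/-!
Realize `p = num / den` (with `den` monic of degree `n + 1`) in controllable canonical form:
`A` is the companion matrix of `den`, `B` the last standard basis vector and `C` the row of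
coefficients of `num`. For the vector of powers `v = (1, z, …, z ^ n)` one has
`(z • 1 - A) v = den(z) • B`. When `z • 1 - A` is invertible, `v ≠ 0` forces `den(z) ≠ 0`, so
`(z • 1 - A)⁻¹ B = v / den(z)` and `C (z • 1 - A)⁻¹ B = num(z) / den(z)`.
-/

open Polynomial Matrix

theorem Matrix.inv_mulVec_eq_inv_smul {K ι : Type*} [Field K] [Fintype ι] [DecidableEq ι]
    {M : Matrix ι ι K} (hM : IsUnit M.det) {v e : ι → K} {d : K} (hv : v ≠ 0)
    (h : M *ᵥ v = d • e) : M⁻¹ *ᵥ e = d⁻¹ • v := by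
  have hd : d ≠ 0 := by
    rintro rfl
    rw [zero_smul, ← mulVec_zero M] at h
    exact hv (mulVec_injective_iff_isUnit.2 ((isUnit_iff_isUnit_det M).2 hM) h)
  rw [← inv_smul_smul₀ hd e, mulVec_smul, ← h, mulVec_mulVec, nonsing_inv_mul M hM, one_mulVec]

namespace Polynomial

section CommRing

variable {R : Type*} [CommRing R]

theorem eval_eq_sum_fin {p : R[X]} {n : ℕ} (hp : p.natDegree < n) (z : R) :
    p.eval z = ∑ j : Fin n, p.coeff j * z ^ (j : ℕ) := by
  rw [eval_eq_sum_range' hp, Fin.sum_univ_eq_sum_range (fun j => p.coeff j * z ^ j)]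

theorem Monic.eval_eq_sum_fin_add_pow {q : R[X]} (hq : q.Monic) {n : ℕ}
    (hn : q.natDegree = n) (z : R) :
    q.eval z = ∑ j : Fin n, q.coeff j * z ^ (j : ℕ) + z ^ n := by
  subst hn
  rw [eval_eq_sum_range' (lt_add_one _), Finset.sum_range_succ, hq.coeff_natDegree, one_mul,
    Fin.sum_univ_eq_sum_range (fun j => q.coeff j * z ^ j)]

theorem natDegree_lt_natDegree_of_natDegree_pos {p q : R[X]} (hpq : p.degree < q.degree)
    (hq : 0 < q.natDegree) : p.natDegree < q.natDegree := by
  rcases eq_or_ne p 0 with rfl | hp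
  · simpa using hq
  · exact natDegree_lt_natDegree hp hpq

/-- The companion matrix of `q` when `q.natDegree = n + 1`. The size is an argument of its own
so that the matrix commutes with `Polynomial.map` without a transport along `natDegree_map`. -/
def companion (q : R[X]) (n : ℕ) : Matrix (Fin (n + 1)) (Fin (n + 1)) R :=
  of fun i j => if (i : ℕ) + 1 = j then 1 else if i = Fin.last n then -q.coeff j else 0

theorem map_companion {S : Type*} [CommRing S] (f : R →+* S) (q : R[X]) (n : ℕ) :
    (companion q n).map f = companion (q.map f) n := by
  ext i j
  simp only [companion, map_apply, of_apply, coeff_map, apply_ite f, map_one, map_neg, map_zero]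

theorem companion_mulVec_powers_castSucc (q : R[X]) {n : ℕ} (z : R) (i : Fin n) :
    (companion q n *ᵥ fun j => z ^ (j : ℕ)) i.castSucc = z ^ ((i : ℕ) + 1) := by
  rw [mulVec, dotProduct, Finset.sum_eq_single i.succ]
  · simp [companion]
  · intro j _ hj
    have : (i : ℕ) + 1 ≠ j := fun h => hj (Fin.ext h.symm)
    simp [companion, this, Fin.castSucc_ne_last]
  · simp

theorem companion_mulVec_powers_last (q : R[X]) {n : ℕ} (z : R) :
    (companion q n *ᵥ fun j => z ^ (j : ℕ)) (Fin.last n)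
      = -∑ j : Fin (n + 1), q.coeff j * z ^ (j : ℕ) := by
  rw [mulVec, dotProduct, ← Finset.sum_neg_distrib]
  refine Finset.sum_congr rfl fun j _ => ?_
  have : n + 1 ≠ (j : ℕ) := by omega
  simp [companion, this]

theorem smul_one_sub_companion_mulVec_powers {q : R[X]} (hq : q.Monic) {n : ℕ}
    (hn : q.natDegree = n + 1) (z : R) :
    (z • 1 - companion q n) *ᵥ (fun j : Fin (n + 1) => z ^ (j : ℕ))
      = q.eval z • Pi.single (Fin.last n) 1 := by
  ext i
  rw [sub_mulVec, smul_mulVec, one_mulVec]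
  induction i using Fin.lastCases with
  | last =>
    rw [Pi.sub_apply, companion_mulVec_powers_last, hq.eval_eq_sum_fin_add_pow hn]
    simp only [Pi.smul_apply, Fin.val_last, smul_eq_mul, Pi.single_eq_same, mul_one,
      ← pow_succ', sub_neg_eq_add]
    ring
  | cast i =>
    rw [Pi.sub_apply, companion_mulVec_powers_castSucc]
    simp [Fin.castSucc_ne_last, pow_succ']

end CommRing

section Field

variable {K : Type*} [Field K]

theorem companion_transfer_eq {num den : K[X]} (hden : den.Monic)
    {n : ℕ} (hn : den.natDegree = n + 1) (hnum : num.degree < den.degree) {z : K}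
    (hz : (z • 1 - companion den n).det ≠ 0) :
    (replicateRow (Fin 1) (fun j : Fin (n + 1) => num.coeff j) * (z • 1 - companion den n)⁻¹
      * replicateCol (Fin 1) (Pi.single (Fin.last n) (1 : K))) 0 0
      = num.eval z / den.eval z := by
  have hnum' : num.natDegree < n + 1 := by
    rw [← hn]
    exact natDegree_lt_natDegree_of_natDegree_pos hnum (by omega)
  have hpowers : (fun j : Fin (n + 1) => z ^ (j : ℕ)) ≠ 0 :=
    fun h => one_ne_zero (α := K) (by simpa using congrFun h 0)
  rw [Matrix.mul_assoc, ← replicateCol_mulVec, replicateRow_mul_replicateCol_apply,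
    inv_mulVec_eq_inv_smul (isUnit_iff_ne_zero.2 hz) hpowers
      (smul_one_sub_companion_mulVec_powers hden hn z),
    dotProduct_smul, smul_eq_mul, div_eq_inv_mul, eval_eq_sum_fin hnum', dotProduct]

end Field

end Polynomial

/-- **Realization theory.** Every proper real rational function `p` (the degree of the
numerator is strictly less than the degree of the denominator) is the transfer function
`C (zI - A)⁻¹ B` of some linear system `(A, B, C)`. -/
theorem exists_realization (p : RatFunc ℝ) (hp : p.num.degree < p.denom.degree) :
    ∃ (n : ℕ), 0 < n ∧ ∃ (A : Matrix (Fin n) (Fin n) ℝ) (B : Matrix (Fin n) (Fin 1) ℝ)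
      (C : Matrix (Fin 1) (Fin n) ℝ),
      ∀ z : ℂ, (z • (1 : Matrix (Fin n) (Fin n) ℂ) - A.map Complex.ofReal).det ≠ 0 →
        RatFunc.eval (algebraMap ℝ ℂ) z p =
          (C.map Complex.ofReal * (z • (1 : Matrix (Fin n) (Fin n) ℂ) - A.map Complex.ofReal)⁻¹
            * B.map Complex.ofReal) 0 0 := by
  cases hdeg : p.denom.natDegree with
  | zero =>
    have hnum : p.num = 0 := by
      rw [← degree_eq_bot, ← Nat.WithBot.lt_zero_iff]
      simpa [degree_eq_natDegree p.denom_ne_zero, hdeg] using hp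
    refine ⟨1, one_pos, 0, 0, 0, fun z _ => ?_⟩
    simp [RatFunc.num_eq_zero_iff.1 hnum]
  | succ n =>
    refine ⟨n + 1, n.succ_pos, companion p.denom n,
      replicateCol (Fin 1) (Pi.single (Fin.last n) 1),
      replicateRow (Fin 1) (fun j => p.num.coeff j), fun z hz => ?_⟩
    have hA : (companion p.denom n).map Complex.ofReal
        = companion (p.denom.map (algebraMap ℝ ℂ)) n :=
      map_companion (algebraMap ℝ ℂ) _ _
    have hB : (replicateCol (Fin 1) (Pi.single (Fin.last n) (1 : ℝ))).map Complex.ofReal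
        = replicateCol (Fin 1) (Pi.single (Fin.last n) 1) := by
      ext i
      simp [Pi.single_apply, apply_ite]
    have hC : (replicateRow (Fin 1) fun j : Fin (n + 1) => p.num.coeff j).map Complex.ofReal
        = replicateRow (Fin 1) fun j : Fin (n + 1) => (p.num.map (algebraMap ℝ ℂ)).coeff j := by
      ext
      simp
    rw [hA] at hz
    rw [hA, hB, hC, RatFunc.eval, ← eval_map, ← eval_map]
    exact (companion_transfer_eq ((RatFunc.monic_denom p).map _) (by rwa [natDegree_map])
      (by rwa [degree_map, degree_map]) hz).symm
end

section
/- Let p and c be rational functions with real coefficients, neither identically ∞. Then c internally stabilizes p relative to the open right half-plane H = {z ∈ ℂ : Re z > 0} if and only if c(z) ≠ 1/p(z) (as points of the Riemann sphere ℂ ∪ {∞}) for every z ∈ H. -/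
/-!
Write `c = a / b` and `p = e / f` in lowest terms and read the values of `c` and `p` at `z` as
the points `[a(z) : b(z)]` and `[e(z) : f(z)]` of the projective line. Then `c(z) = 1/p(z)`
exactly when `z` is a root of the closed-loop polynomial `bf - ae`. Since
`1 - cp = (bf - ae) / (bf)`, every zero of `1 - cp` is such a root, and a root with
`b(z) f(z) ≠ 0` is a zero of `1 - cp`. At a root with `b(z) = 0` or `f(z) = 0`, coprimality of
numerator and denominator forces a pole of `c` at a zero of `p` or a zero of `c` at a pole of `p`.
-/

open Polynomial OnePoint

/-- Evaluation of a real rational function at a complex point, as a point of the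
Riemann sphere `ℂ ∪ {∞}`. -/
noncomputable def RatFunc.sphereEvalR (p : RatFunc ℝ) (z : ℂ) : OnePoint ℂ :=
  if p.denom.eval₂ (algebraMap ℝ ℂ) z = 0 then ∞
  else ((p.num.eval₂ (algebraMap ℝ ℂ) z / p.denom.eval₂ (algebraMap ℝ ℂ) z : ℂ) : OnePoint ℂ)

/-- The map `w ↦ 1/w` on the Riemann sphere, sending `0 ↦ ∞` and `∞ ↦ 0`. -/
noncomputable def sphereInv (x : OnePoint ℂ) : OnePoint ℂ :=
  Option.elim x ((0:ℂ) : OnePoint ℂ)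
    (fun w => if w = 0 then ∞ else ((w⁻¹ : ℂ) : OnePoint ℂ))

/-- `c` internally stabilizes `p` relative to the domain `Ω`: the function `1 - c p` has no
zeros in `Ω`, no pole of `c` in `Ω` is a zero of `p`, and no zero of `c` in `Ω` is a pole
of `p`. -/
def InternallyStabilizes (c p : RatFunc ℝ) (Ω : Set ℂ) : Prop :=
  (∀ z ∈ Ω, RatFunc.sphereEvalR (1 - c * p) z ≠ ((0:ℂ) : OnePoint ℂ)) ∧
  (∀ z ∈ Ω, RatFunc.sphereEvalR c z = ∞ → RatFunc.sphereEvalR p z ≠ ((0:ℂ) : OnePoint ℂ)) ∧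
  (∀ z ∈ Ω, RatFunc.sphereEvalR c z = ((0:ℂ) : OnePoint ℂ) → RatFunc.sphereEvalR p z ≠ ∞)

namespace OnePoint

variable {K : Type*} [Field K] [DecidableEq K] {a b c d : K}

def ofHomogCoords (a b : K) : OnePoint K := if b = 0 then ∞ else ↑(a / b)

theorem ofHomogCoords_eq_infty_iff : ofHomogCoords a b = ∞ ↔ b = 0 := by
  unfold ofHomogCoords
  split_ifs with hb <;> simp [hb]

theorem ofHomogCoords_eq_zero_iff :
    ofHomogCoords a b = ((0 : K) : OnePoint K) ↔ b ≠ 0 ∧ a = 0 := by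
  unfold ofHomogCoords
  split_ifs with hb <;> simp [hb]

theorem ofHomogCoords_eq_ofHomogCoords_iff (hab : a ≠ 0 ∨ b ≠ 0) (hcd : c ≠ 0 ∨ d ≠ 0) :
    ofHomogCoords a b = ofHomogCoords c d ↔ a * d = c * b := by
  unfold ofHomogCoords
  by_cases hb : b = 0 <;> by_cases hd : d = 0
  · simp [hb, hd]
  · simp [hb, hd, hab.resolve_right (not_not.2 hb)]
  · simp [hb, hd, hcd.resolve_right (not_not.2 hd), Ne.symm]
  · simp [hb, hd, div_eq_div_iff hb hd]

end OnePoint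

theorem sphereInv_infty : sphereInv ∞ = ((0 : ℂ) : OnePoint ℂ) := rfl

theorem sphereInv_coe (w : ℂ) : sphereInv w = if w = 0 then ∞ else ↑w⁻¹ := rfl

theorem sphereInv_ofHomogCoords {a b : ℂ} (hab : a ≠ 0 ∨ b ≠ 0) :
    sphereInv (ofHomogCoords a b) = ofHomogCoords b a := by
  unfold ofHomogCoords
  by_cases hb : b = 0
  · simp [hb, hab.resolve_right (not_not.2 hb), sphereInv_infty]
  · by_cases ha : a = 0 <;> simp [ha, hb, sphereInv_coe]

namespace RatFunc

variable {K : Type*} [Field K]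

/-- For a controller `c` and a plant `p`, the characteristic polynomial of their feedback loop. -/
noncomputable def closedLoopPoly (c p : RatFunc K) : K[X] := c.denom * p.denom - c.num * p.num

theorem num_denom_one_sub_mul (c p : RatFunc K) :
    (1 - c * p).num * (c.denom * p.denom) = closedLoopPoly c p * (1 - c * p).denom := by
  refine (num_mul_eq_mul_denom_iff (mul_ne_zero (denom_ne_zero c) (denom_ne_zero p))).mpr ?_
  conv_lhs => rw [← num_div_denom c, ← num_div_denom p]
  have hc := algebraMap_ne_zero (denom_ne_zero c)
  have hp := algebraMap_ne_zero (denom_ne_zero p)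
  simp only [closedLoopPoly, map_mul, map_sub]
  field_simp

section Evaluation

variable {L : Type*} [CommRing L] [IsDomain L] [Algebra K L]

theorem aeval_num_ne_zero_or_aeval_denom_ne_zero (r : RatFunc K) (z : L) :
    aeval z r.num ≠ 0 ∨ aeval z r.denom ≠ 0 := by
  by_contra! h
  have := (isCoprime_num_denom r).map (aeval z).toRingHom
  simp only [AlgHom.toRingHom_eq_coe, RingHom.coe_coe, h.1, h.2] at this
  exact not_isCoprime_zero_zero this

theorem aeval_closedLoopPoly_eq_zero_of_aeval_num_one_sub_mul {c p : RatFunc K} {z : L}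
    (h : aeval z (1 - c * p).num = 0) : aeval z (closedLoopPoly c p) = 0 := by
  have hden :=
    (aeval_num_ne_zero_or_aeval_denom_ne_zero (1 - c * p) z).resolve_left (not_not.2 h)
  have hz := congrArg (aeval z) (num_denom_one_sub_mul c p)
  rw [map_mul, map_mul _ (closedLoopPoly c p), h, zero_mul] at hz
  exact (mul_eq_zero.1 hz.symm).resolve_right hden

theorem aeval_num_one_sub_mul_eq_zero_of_aeval_closedLoopPoly {c p : RatFunc K} {z : L}
    (hden : aeval z (c.denom * p.denom) ≠ 0) (h : aeval z (closedLoopPoly c p) = 0) :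
    aeval z (1 - c * p).num = 0 := by
  have hz := congrArg (aeval z) (num_denom_one_sub_mul c p)
  rw [map_mul, map_mul _ (closedLoopPoly c p), h, zero_mul] at hz
  exact (mul_eq_zero.1 hz).resolve_right hden

end Evaluation

theorem sphereEvalR_eq_ofHomogCoords (r : RatFunc ℝ) (z : ℂ) :
    r.sphereEvalR z = ofHomogCoords (aeval z r.num) (aeval z r.denom) := rfl

variable {c p r : RatFunc ℝ} {z : ℂ}

theorem sphereEvalR_eq_infty_iff : r.sphereEvalR z = ∞ ↔ aeval z r.denom = 0 :=
  ofHomogCoords_eq_infty_iff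

theorem sphereEvalR_eq_zero_iff :
    r.sphereEvalR z = ((0 : ℂ) : OnePoint ℂ) ↔ aeval z r.num = 0 := by
  rw [sphereEvalR_eq_ofHomogCoords, ofHomogCoords_eq_zero_iff, and_iff_right_iff_imp]
  exact fun h => (aeval_num_ne_zero_or_aeval_denom_ne_zero r z).resolve_left (not_not.2 h)

theorem sphereEvalR_eq_sphereInv_iff :
    c.sphereEvalR z = sphereInv (p.sphereEvalR z) ↔ aeval z (closedLoopPoly c p) = 0 := by
  have hp := aeval_num_ne_zero_or_aeval_denom_ne_zero p z
  rw [sphereEvalR_eq_ofHomogCoords, sphereEvalR_eq_ofHomogCoords, sphereInv_ofHomogCoords hp,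
    ofHomogCoords_eq_ofHomogCoords_iff (aeval_num_ne_zero_or_aeval_denom_ne_zero c z) hp.symm]
  simp only [closedLoopPoly, map_sub, map_mul]
  constructor <;> intro h <;> linear_combination -h

variable (c p)

theorem internallyStabilizes_pointwise_iff (z : ℂ) :
    ((1 - c * p).sphereEvalR z ≠ ((0 : ℂ) : OnePoint ℂ) ∧
      (c.sphereEvalR z = ∞ → p.sphereEvalR z ≠ ((0 : ℂ) : OnePoint ℂ)) ∧
      (c.sphereEvalR z = ((0 : ℂ) : OnePoint ℂ) → p.sphereEvalR z ≠ ∞)) ↔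
      aeval z (closedLoopPoly c p) ≠ 0 := by
  simp only [ne_eq, sphereEvalR_eq_infty_iff, sphereEvalR_eq_zero_iff]
  have hloop : aeval z (closedLoopPoly c p) =
      aeval z c.denom * aeval z p.denom - aeval z c.num * aeval z p.num := by
    simp only [closedLoopPoly, map_sub, map_mul]
  rw [hloop]
  constructor
  · rintro ⟨hA, hB, hC⟩ h
    by_cases hb : aeval z c.denom = 0
    · have ha := (aeval_num_ne_zero_or_aeval_denom_ne_zero c z).resolve_right (not_not.2 hb)
      exact hB hb (by simpa [hb, ha] using h)
    by_cases hf : aeval z p.denom = 0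
    · have he := (aeval_num_ne_zero_or_aeval_denom_ne_zero p z).resolve_right (not_not.2 hf)
      exact hC (by simpa [hf, he] using h) hf
    exact hA <| aeval_num_one_sub_mul_eq_zero_of_aeval_closedLoopPoly (by simp [hb, hf])
      (hloop.trans h)
  · intro h
    refine ⟨fun hA => h (hloop ▸ aeval_closedLoopPoly_eq_zero_of_aeval_num_one_sub_mul hA),
      fun hb he => h ?_, fun ha hf => h ?_⟩ <;> simp [*]

theorem internallyStabilizes_iff_forall_aeval_closedLoopPoly_ne_zero (Ω : Set ℂ) :
    InternallyStabilizes c p Ω ↔ ∀ z ∈ Ω, aeval z (closedLoopPoly c p) ≠ 0 := by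
  simp only [InternallyStabilizes, ← internallyStabilizes_pointwise_iff, forall₂_and]

end RatFunc

/-- `c` internally stabilizes `p` relative to the open right half-plane `H` if and only if
`c(z) ≠ 1/p(z)` (as points of the Riemann sphere) for every `z ∈ H`. -/
theorem internallyStabilizes_iff_avoids_inv (p c : RatFunc ℝ) :
    InternallyStabilizes c p {z : ℂ | 0 < z.re} ↔
      ∀ z : ℂ, 0 < z.re → RatFunc.sphereEvalR c z ≠ sphereInv (RatFunc.sphereEvalR p z) := by
  simp only [RatFunc.internallyStabilizes_iff_forall_aeval_closedLoopPoly_ne_zero, ne_eq,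
    RatFunc.sphereEvalR_eq_sphereInv_iff, Set.mem_ofPred_eq]
end

section
/- For every rational function p with real coefficients there exists a rational function c with real coefficients that internally stabilizes p relative to the open right half-plane H; that is, a single linear system can always be stabilized by some feedback controller (of unrestricted degree). -/
open Polynomial OnePoint

/-! A Bézout identity `a * p.denom - b * p.num = 1` with `a ≠ 0` yields the controller `c = b / a`:
then `1 - c p = 1 / (a * p.denom)` has no zeros at all, and at a point where `c` has a pole
(resp. zero) and `p` a zero (resp. pole), both products `a * p.denom` and `b * p.num` would vanish,
contradicting the identity. -/

theorem IsCoprime.exists_ne_zero_mul_sub_mul_eq_one {R : Type*} [CommRing R] [Nontrivial R]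
    {n d : R} (h : IsCoprime n d) : ∃ a b : R, a ≠ 0 ∧ a * d - b * n = 1 := by
  obtain ⟨u, v, huv⟩ := h
  by_cases hv : v = 0
  · subst hv
    refine ⟨n, d - u, fun hn => ?_, by linear_combination huv⟩
    simp [hn] at huv
  · exact ⟨v, -u, hv, by linear_combination huv⟩

namespace RatFunc

variable {q : RatFunc ℝ} {z : ℂ}

theorem sphereEvalR_eq_infty_iff_s4 : q.sphereEvalR z = ∞ ↔ q.denom.eval₂ (algebraMap ℝ ℂ) z = 0 := by
  unfold sphereEvalR
  split_ifs with h <;> simp [h]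

theorem num_eval₂_eq_zero_of_sphereEvalR_eq_zero (h : q.sphereEvalR z = ((0 : ℂ) : OnePoint ℂ)) :
    q.num.eval₂ (algebraMap ℝ ℂ) z = 0 := by
  unfold sphereEvalR at h
  split_ifs at h with hd
  · exact absurd h (infty_ne_coe _)
  · simpa [hd] using h

variable {a b : ℝ[X]}

theorem eval₂_eq_zero_of_sphereEvalR_div_eq_zero (ha : a ≠ 0)
    (h : (algebraMap ℝ[X] (RatFunc ℝ) b / algebraMap ℝ[X] (RatFunc ℝ) a).sphereEvalR z =
      ((0 : ℂ) : OnePoint ℂ)) :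
    b.eval₂ (algebraMap ℝ ℂ) z = 0 := by
  obtain ⟨t, hb⟩ := num_div_dvd b ha
  rw [hb, eval₂_mul, num_eval₂_eq_zero_of_sphereEvalR_eq_zero h, zero_mul]

theorem eval₂_eq_zero_of_sphereEvalR_div_eq_infty
    (h : (algebraMap ℝ[X] (RatFunc ℝ) b / algebraMap ℝ[X] (RatFunc ℝ) a).sphereEvalR z = ∞) :
    a.eval₂ (algebraMap ℝ ℂ) z = 0 := by
  obtain ⟨t, ha⟩ := denom_div_dvd b a
  rw [ha, eval₂_mul, sphereEvalR_eq_infty_iff_s4.mp h, zero_mul]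

end RatFunc

open RatFunc in
theorem internallyStabilizes_div_of_mul_sub_mul_eq_one {p : RatFunc ℝ} {a b : ℝ[X]} (ha : a ≠ 0)
    (hab : a * p.denom - b * p.num = 1) (Ω : Set ℂ) :
    InternallyStabilizes (algebraMap ℝ[X] (RatFunc ℝ) b / algebraMap ℝ[X] (RatFunc ℝ) a) p Ω := by
  have hab_eval (z : ℂ) : a.eval₂ (algebraMap ℝ ℂ) z * p.denom.eval₂ (algebraMap ℝ ℂ) z -
      b.eval₂ (algebraMap ℝ ℂ) z * p.num.eval₂ (algebraMap ℝ ℂ) z = 1 := by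
    simpa using congrArg (eval₂ (algebraMap ℝ ℂ) z) hab
  have hone_sub_mul : 1 - algebraMap ℝ[X] (RatFunc ℝ) b / algebraMap ℝ[X] (RatFunc ℝ) a * p =
      algebraMap ℝ[X] (RatFunc ℝ) 1 / algebraMap ℝ[X] (RatFunc ℝ) (a * p.denom) := by
    have ha' : algebraMap ℝ[X] (RatFunc ℝ) a ≠ 0 := algebraMap_ne_zero ha
    have hd' : algebraMap ℝ[X] (RatFunc ℝ) p.denom ≠ 0 := algebraMap_ne_zero p.denom_ne_zero
    calc 1 - algebraMap ℝ[X] (RatFunc ℝ) b / algebraMap ℝ[X] (RatFunc ℝ) a * p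
        = 1 - algebraMap ℝ[X] (RatFunc ℝ) b / algebraMap ℝ[X] (RatFunc ℝ) a *
            (algebraMap ℝ[X] (RatFunc ℝ) p.num / algebraMap ℝ[X] (RatFunc ℝ) p.denom) := by
          rw [num_div_denom]
      _ = algebraMap ℝ[X] (RatFunc ℝ) (a * p.denom - b * p.num) /
            algebraMap ℝ[X] (RatFunc ℝ) (a * p.denom) := by
          simp only [map_sub, map_mul]
          field_simp
      _ = _ := by rw [hab]
  refine ⟨fun z _ h => ?_, fun z _ hc hp0 => ?_, fun z _ hc hp_inf => ?_⟩
  · rw [hone_sub_mul] at h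
    simpa using eval₂_eq_zero_of_sphereEvalR_div_eq_zero (mul_ne_zero ha p.denom_ne_zero) h
  · simpa [eval₂_eq_zero_of_sphereEvalR_div_eq_infty hc,
      num_eval₂_eq_zero_of_sphereEvalR_eq_zero hp0] using hab_eval z
  · simpa [eval₂_eq_zero_of_sphereEvalR_div_eq_zero ha hc, sphereEvalR_eq_infty_iff_s4.mp hp_inf]
      using hab_eval z

/-- Every single real rational transfer function can be internally stabilized by some real
rational feedback controller. -/
theorem exists_stabilizing_controller (p : RatFunc ℝ) :
    ∃ c : RatFunc ℝ, InternallyStabilizes c p {z : ℂ | 0 < z.re} := by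
  obtain ⟨a, b, ha, hab⟩ := (RatFunc.isCoprime_num_denom p).exists_ne_zero_mul_sub_mul_eq_one
  exact ⟨_, internallyStabilizes_div_of_mul_sub_mul_eq_one ha hab _⟩
end

section
/- For any two rational functions φ₁ and φ₂ over ℂ, there exists a rational function c over ℂ (possibly with non-real coefficients) such that c(z) ≠ φ₁(z) and c(z) ≠ φ₂(z) (as points of the Riemann sphere ℂ ∪ {∞}) for every z in the open right half-plane H. -/
open Polynomial OnePoint

/-- Evaluation of a complex rational function at a point of `ℂ`, as a point of the
Riemann sphere `ℂ ∪ {∞}`. -/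
noncomputable def RatFunc.sphereEval (p : RatFunc ℂ) (z : ℂ) : OnePoint ℂ :=
  if p.denom.eval z = 0 then ∞ else ((p.num.eval z / p.denom.eval z : ℂ) : OnePoint ℂ)

/-!
Write `φᵢ = pᵢ / qᵢ` in lowest terms, let `Δ = p₂ q₁ - p₁ q₂ = m Δ₀` where `m` collects the roots
of `Δ` in `H`. If `F` and `G` have no zeros in `H` and `m` divides `p₁ F + p₂ G = m r` and
`q₁ F + q₂ G = m s`, then `c = r / s` works, because `r qᵢ - pᵢ s` is `G Δ₀` resp. `-F Δ₀`.
A Bézout identity for `p₁, q₁` turns both divisibilities into one congruence `F ≡ u G (mod m)`,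
which is solved one root `ζ` of `m` at a time: a solution modulo `M` is multiplied by `f ^ N`
resp. `g ^ N`, where `g = (X + 1) ^ deg M` and `f = g + γ M` agree modulo `M`. For small `γ`
the polynomial `f` has no zeros in `H`, and the remaining condition at `ζ` is solved with `γ`
small by taking `N` large and an `N`-th root close to `1`.
-/

open Filter Topology Finset

namespace Polynomial

def ZeroFreeOn {R : Type*} [CommSemiring R] (P : R[X]) (S : Set R) : Prop :=
  ∀ z ∈ S, P.eval z ≠ 0

namespace ZeroFreeOn

variable {R : Type*} [CommSemiring R] {P Q : R[X]} {S : Set R}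

lemma one [Nontrivial R] : (1 : R[X]).ZeroFreeOn S := fun z _ => by simp

lemma mul [NoZeroDivisors R] (hP : P.ZeroFreeOn S) (hQ : Q.ZeroFreeOn S) :
    (P * Q).ZeroFreeOn S := fun z hz => by
  rw [eval_mul]; exact mul_ne_zero (hP z hz) (hQ z hz)

lemma pow [NoZeroDivisors R] (hP : P.ZeroFreeOn S) (n : ℕ) : (P ^ n).ZeroFreeOn S :=
  fun z hz => by rw [eval_pow]; exact pow_ne_zero n (hP z hz)

lemma ne_zero (hP : P.ZeroFreeOn S) (hS : S.Nonempty) : P ≠ 0 := by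
  rintro rfl
  obtain ⟨z, hz⟩ := hS
  exact hP z hz eval_zero

end ZeroFreeOn

lemma norm_eval_le_sum_norm_coeff_mul_pow {𝕜 : Type*} [NormedField 𝕜] (P : 𝕜[X]) {z : 𝕜} {t : ℝ}
    (ht : 1 ≤ t) (hz : ‖z‖ ≤ t) :
    ‖P.eval z‖ ≤ (∑ i ∈ range (P.natDegree + 1), ‖P.coeff i‖) * t ^ P.natDegree := by
  rw [eval_eq_sum_range, sum_mul]
  refine (norm_sum_le _ _).trans (sum_le_sum fun i hi => ?_)
  rw [norm_mul, norm_pow]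
  gcongr
  calc ‖z‖ ^ i ≤ t ^ i := by gcongr
    _ ≤ t ^ P.natDegree := pow_le_pow_right₀ ht (Nat.lt_succ_iff.mp (mem_range.mp hi))

end Polynomial

def rightHalfPlane : Set ℂ := {z | 0 < z.re}

lemma mem_rightHalfPlane {z : ℂ} : z ∈ rightHalfPlane ↔ 0 < z.re := Iff.rfl

lemma rightHalfPlane_nonempty : rightHalfPlane.Nonempty := ⟨1, by simp [mem_rightHalfPlane]⟩

lemma norm_le_norm_add_one_of_mem_rightHalfPlane {z : ℂ} (hz : z ∈ rightHalfPlane) :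
    ‖z‖ ≤ ‖z + 1‖ := by
  rw [mem_rightHalfPlane] at hz
  rw [← sq_le_sq₀ (norm_nonneg _) (norm_nonneg _), Complex.sq_norm, Complex.sq_norm,
    Complex.normSq_apply, Complex.normSq_apply]
  simp only [Complex.add_re, Complex.one_re, Complex.add_im, Complex.one_im, add_zero]
  nlinarith

lemma one_le_norm_add_one_of_mem_rightHalfPlane {z : ℂ} (hz : z ∈ rightHalfPlane) :
    1 ≤ ‖z + 1‖ := by
  rw [mem_rightHalfPlane] at hz
  calc (1 : ℝ) ≤ (z + 1).re := by simp; linarith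
    _ ≤ ‖z + 1‖ := Complex.re_le_norm _

lemma zeroFreeOn_X_add_one_pow (d : ℕ) : ((X + 1 : ℂ[X]) ^ d).ZeroFreeOn rightHalfPlane := by
  refine ZeroFreeOn.pow (fun z hz h0 => ?_) d
  have := one_le_norm_add_one_of_mem_rightHalfPlane hz
  rw [eval_add, eval_X, eval_one] at h0
  rw [h0, norm_zero] at this
  linarith

/-- Since `‖P z‖ ≤ K ‖z + 1‖ ^ deg P` on the half-plane, a small multiple of `P` cannot cancel
`(z + 1) ^ deg P` there. -/
lemma exists_zeroFreeOn_X_add_one_pow_add_C_mul (P : ℂ[X]) :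
    ∃ ε > 0, ∀ γ : ℂ, ‖γ‖ < ε →
      ((X + 1) ^ P.natDegree + C γ * P).ZeroFreeOn rightHalfPlane := by
  set K := ∑ i ∈ range (P.natDegree + 1), ‖P.coeff i‖
  have hK : 0 ≤ K := sum_nonneg fun _ _ => norm_nonneg _
  refine ⟨1 / (K + 1), by positivity, fun γ hγ z hz h0 => ?_⟩
  have h1 := one_le_norm_add_one_of_mem_rightHalfPlane hz
  have hbound := P.norm_eval_le_sum_norm_coeff_mul_pow h1
    (norm_le_norm_add_one_of_mem_rightHalfPlane hz)
  have hγK : ‖γ‖ * K < 1 := by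
    rw [lt_div_iff₀ (by positivity)] at hγ; nlinarith [norm_nonneg γ]
  rw [eval_add, eval_mul, eval_C, eval_pow, eval_add, eval_X, eval_one,
    add_eq_zero_iff_eq_neg] at h0
  have hpos : 0 < ‖z + 1‖ ^ P.natDegree := by positivity
  have : ‖z + 1‖ ^ P.natDegree ≤ ‖γ‖ * K * ‖z + 1‖ ^ P.natDegree := by
    calc ‖z + 1‖ ^ P.natDegree = ‖γ‖ * ‖P.eval z‖ := by rw [← norm_pow, h0, norm_neg, norm_mul]
      _ ≤ ‖γ‖ * (K * ‖z + 1‖ ^ P.natDegree) := by gcongr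
      _ = ‖γ‖ * K * ‖z + 1‖ ^ P.natDegree := by ring
  nlinarith

lemma exists_pow_eq_norm_sub_one_lt {ρ : ℂ} (hρ : ρ ≠ 0) {δ : ℝ} (hδ : 0 < δ) :
    ∃ N : ℕ, ∃ E : ℂ, E ^ N = ρ ∧ ‖E - 1‖ < δ := by
  have hlim : Tendsto (fun N : ℕ => Complex.exp (Complex.log ρ / N)) atTop (𝓝 1) := by
    simpa [Function.comp_def] using (Complex.continuous_exp.tendsto 0).comp
      (tendsto_const_div_atTop_nhds_zero_nat (Complex.log ρ))
  obtain ⟨N, hN, hNpos⟩ :=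
    ((hlim.eventually (Metric.ball_mem_nhds 1 hδ)).and (eventually_gt_atTop 0)).exists
  refine ⟨N, Complex.exp (Complex.log ρ / N), ?_, by rwa [dist_eq_norm] at hN⟩
  rw [← Complex.exp_nat_mul, mul_div_cancel₀ _ (by exact_mod_cast hNpos.ne'), Complex.exp_log hρ]

lemma exists_norm_lt_mul_geom_sum₂_add_eq_zero {a w μ r : ℂ} (ha : a ≠ 0) (hw : w ≠ 0)
    (har : a - μ * r ≠ 0) {ε : ℝ} (hε : 0 < ε) :
    ∃ (N : ℕ) (γ : ℂ), ‖γ‖ < ε ∧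
      γ * a * ∑ i ∈ range N, (w + γ * μ) ^ i * w ^ (N - 1 - i) + w ^ N * r = 0 := by
  rcases eq_or_ne μ 0 with rfl | hμ
  · -- the sum is `N * w ^ (N - 1)`, so `γ` of size `1 / N` works
    obtain ⟨N, hN⟩ := exists_nat_gt (‖w * r / a‖ / ε)
    have hNpos : (0 : ℝ) < N := lt_of_le_of_lt (by positivity) hN
    obtain ⟨n, rfl⟩ : ∃ n, N = n + 1 := Nat.exists_eq_add_one.mpr (by exact_mod_cast hNpos)
    set γ : ℂ := -(w * r / a) / (n + 1 : ℕ) with hγ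
    refine ⟨n + 1, γ, ?_, ?_⟩
    · rw [norm_div, norm_neg, Complex.norm_natCast, div_lt_iff₀ hNpos]
      rw [div_lt_iff₀ hε] at hN; linarith
    · have hsum : ∑ i ∈ range (n + 1), (w + γ * 0) ^ i * w ^ (n + 1 - 1 - i) =
          (n + 1 : ℕ) * w ^ n := by
        rw [sum_congr rfl fun i hi => ?_, sum_const, card_range, nsmul_eq_mul]
        rw [mul_zero, add_zero, ← pow_add]
        congr 1
        have := mem_range.mp hi
        omega
      rw [hsum, hγ]
      field_simp
      ring
  · -- times `μ`, the equation says `((w + γ * μ) / w) ^ N = (a - μ * r) / a`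
    obtain ⟨N, E, hEN, hE⟩ := exists_pow_eq_norm_sub_one_lt (div_ne_zero har ha)
      (δ := ε * ‖μ‖ / ‖w‖) (by positivity)
    refine ⟨N, w * (E - 1) / μ, ?_, ?_⟩
    · rw [norm_div, norm_mul, div_lt_iff₀ (norm_pos_iff.mpr hμ)]
      rw [lt_div_iff₀ (norm_pos_iff.mpr hw)] at hE
      linarith
    · have hgeom := geom_sum₂_mul (w + w * (E - 1) / μ * μ) w N
      rw [div_mul_cancel₀ _ hμ, show w + w * (E - 1) = w * E by ring, mul_pow, hEN] at hgeom
      rw [div_mul_cancel₀ _ hμ, show w + w * (E - 1) = w * E by ring]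
      apply mul_left_cancel₀ hμ
      field_simp at hgeom ⊢
      linear_combination hgeom

lemma mul_pow_sub_mul_mul_pow {R : Type*} [CommRing R] {F₀ G₀ u M R₀ f g γ : R}
    (hR₀ : F₀ - u * G₀ = M * R₀) (hfg : f - g = γ * M) (N : ℕ) :
    F₀ * f ^ N - u * (G₀ * g ^ N) =
      M * (γ * F₀ * ∑ i ∈ range N, f ^ i * g ^ (N - 1 - i) + g ^ N * R₀) := by
  linear_combination -F₀ * geom_sum₂_mul f g N
    + F₀ * (∑ i ∈ range N, f ^ i * g ^ (N - 1 - i)) * hfg + g ^ N * hR₀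

lemma exists_zeroFreeOn_dvd_X_sub_C_mul_sub_mul {u M F₀ G₀ : ℂ[X]} {ζ : ℂ}
    (hζ : ζ ∈ rightHalfPlane) (huζ : u.eval ζ ≠ 0) (hF₀ : F₀.ZeroFreeOn rightHalfPlane)
    (hG₀ : G₀.ZeroFreeOn rightHalfPlane) (hM : M ∣ F₀ - u * G₀) :
    ∃ F G : ℂ[X], F.ZeroFreeOn rightHalfPlane ∧ G.ZeroFreeOn rightHalfPlane ∧
      (X - C ζ) * M ∣ F - u * G := by
  obtain ⟨R₀, hR₀⟩ := hM
  obtain ⟨ε, hε, hf⟩ := exists_zeroFreeOn_X_add_one_pow_add_C_mul M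
  set g : ℂ[X] := (X + 1) ^ M.natDegree
  have hR₀ζ : F₀.eval ζ - M.eval ζ * R₀.eval ζ = u.eval ζ * G₀.eval ζ := by
    have := congrArg (eval ζ) hR₀
    simp only [eval_sub, eval_mul] at this
    linear_combination this
  obtain ⟨N, γ, hγ, hζroot⟩ := exists_norm_lt_mul_geom_sum₂_add_eq_zero (hF₀ ζ hζ)
    (zeroFreeOn_X_add_one_pow _ ζ hζ) (hR₀ζ ▸ mul_ne_zero huζ (hG₀ ζ hζ)) hε
  set f : ℂ[X] := g + C γ * M
  refine ⟨F₀ * f ^ N, G₀ * g ^ N, hF₀.mul ((hf γ hγ).pow N),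
    hG₀.mul ((zeroFreeOn_X_add_one_pow _).pow N), ?_⟩
  rw [mul_pow_sub_mul_mul_pow hR₀ (show f - g = C γ * M by ring) N, mul_comm (X - C ζ) M]
  refine mul_dvd_mul_left M (dvd_iff_isRoot.mpr ?_)
  simpa [f, g, eval_finsetSum] using hζroot

lemma exists_zeroFreeOn_prod_dvd_sub_mul (u : ℂ[X]) (s : Multiset ℂ)
    (hs : ∀ ζ ∈ s, ζ ∈ rightHalfPlane ∧ u.eval ζ ≠ 0) :
    ∃ F G : ℂ[X], F.ZeroFreeOn rightHalfPlane ∧ G.ZeroFreeOn rightHalfPlane ∧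
      (s.map fun ζ => X - C ζ).prod ∣ F - u * G := by
  induction s using Multiset.induction_on with
  | empty => exact ⟨1, 1, .one, .one, by simp⟩
  | cons ζ s ih =>
    obtain ⟨hζ, huζ⟩ := hs ζ (Multiset.mem_cons_self ζ s)
    obtain ⟨F₀, G₀, hF₀, hG₀, hdvd⟩ := ih fun ξ hξ => hs ξ (Multiset.mem_cons_of_mem hξ)
    rw [Multiset.map_cons, Multiset.prod_cons]
    exact exists_zeroFreeOn_dvd_X_sub_C_mul_sub_mul hζ huζ hF₀ hG₀ hdvd

lemma exists_eq_prod_mul_zeroFreeOn {Δ : ℂ[X]} (hΔ : Δ ≠ 0) :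
    ∃ (s : Multiset ℂ) (Δ₀ : ℂ[X]), (∀ ζ ∈ s, ζ ∈ rightHalfPlane ∧ Δ.IsRoot ζ) ∧
      Δ₀.ZeroFreeOn rightHalfPlane ∧ Δ = (s.map fun ζ => X - C ζ).prod * Δ₀ := by
  classical
  refine ⟨Δ.roots.filter (· ∈ rightHalfPlane), C Δ.leadingCoeff *
    ((Δ.roots.filter (· ∉ rightHalfPlane)).map fun ζ => X - C ζ).prod,
    fun ζ hζ => ?_, fun z hz => ?_, ?_⟩
  · obtain ⟨hroot, hζ⟩ := Multiset.mem_filter.mp hζ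
    exact ⟨hζ, (mem_roots hΔ).mp hroot⟩
  · rw [eval_mul, eval_C, eval_multiset_prod, Multiset.map_map]
    refine mul_ne_zero (leadingCoeff_ne_zero.mpr hΔ) (Multiset.prod_ne_zero fun h0 => ?_)
    obtain ⟨ζ, hζ, hzζ⟩ := Multiset.mem_map.mp h0
    have : z = ζ := by simpa [sub_eq_zero] using hzζ
    exact (Multiset.mem_filter.mp hζ).2 (this ▸ hz)
  · conv_lhs => rw [← C_leadingCoeff_mul_prod_multiset_X_sub_C (p := Δ)
      IsAlgClosed.card_roots_eq_natDegree, ← Multiset.filter_add_not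
      (· ∈ rightHalfPlane) Δ.roots, Multiset.map_add, Multiset.prod_add]
    ring

lemma eval_ne_zero_or_of_isCoprime {p q : ℂ[X]} (h : IsCoprime p q) (z : ℂ) :
    p.eval z ≠ 0 ∨ q.eval z ≠ 0 := by
  simpa only [coe_aeval_eq_eval] using aeval_ne_zero_of_isCoprime h z

lemma RatFunc.sphereEval_ne_sphereEval {c φ : RatFunc ℂ} {z : ℂ}
    (h : (c.num * φ.denom - φ.num * c.denom).eval z ≠ 0) : c.sphereEval z ≠ φ.sphereEval z := by
  simp only [Polynomial.eval_sub, Polynomial.eval_mul] at h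
  unfold sphereEval
  split_ifs with hc hφ hφ
  · simp [hc, hφ] at h
  · exact infty_ne_coe _
  · exact coe_ne_infty _
  · rw [Ne, coe_eq_coe, div_eq_div_iff hc hφ]
    exact fun h' => h (by linear_combination h')

lemma RatFunc.sphereEval_ne_of_num_mul_eq {c φ : RatFunc ℂ} {r s : ℂ[X]} {z : ℂ}
    (hc : c.num * s = r * c.denom) (hz : (r * φ.denom - φ.num * s).eval z ≠ 0) :
    c.sphereEval z ≠ φ.sphereEval z := by
  refine sphereEval_ne_sphereEval ?_
  have hcz := congrArg (fun p : ℂ[X] => p.eval z) hc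
  simp only [Polynomial.eval_sub, Polynomial.eval_mul] at hz hcz ⊢
  rcases eq_or_ne (c.denom.eval z) 0 with hd | hd
  · have hn := (eval_ne_zero_or_of_isCoprime c.isCoprime_num_denom z).resolve_right
      (not_not.mpr hd)
    have hs : s.eval z = 0 := by simpa [hd, hn] using hcz
    rw [hs, mul_zero, sub_zero] at hz
    rw [hd, mul_zero, sub_zero]
    exact mul_ne_zero hn (right_ne_zero_of_mul hz)
  · intro h0
    exact hz (mul_left_cancel₀ hd (by linear_combination (s.eval z) * h0 - φ.denom.eval z * hcz))

lemma exists_zeroFreeOn_dvd_sub_mul_and_ne_zero {u M q₁ q₂ F₀ G₀ : ℂ[X]} (hM : M ≠ 0)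
    (hq₂ : q₂ ≠ 0) (hF₀ : F₀.ZeroFreeOn rightHalfPlane) (hG₀ : G₀.ZeroFreeOn rightHalfPlane)
    (hdvd : M ∣ F₀ - u * G₀) :
    ∃ F G : ℂ[X], F.ZeroFreeOn rightHalfPlane ∧ G.ZeroFreeOn rightHalfPlane ∧
      M ∣ F - u * G ∧ q₁ * F + q₂ * G ≠ 0 := by
  by_cases h0 : q₁ * F₀ + q₂ * G₀ = 0
  · obtain ⟨ε, hε, hf⟩ := exists_zeroFreeOn_X_add_one_pow_add_C_mul M
    set g : ℂ[X] := (X + 1) ^ M.natDegree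
    set γ : ℂ := ((ε / 2 : ℝ) : ℂ)
    have hγ : ‖γ‖ < ε := by
      rw [Complex.norm_of_nonneg (by positivity)]; linarith
    have hγ₀ : γ ≠ 0 := Complex.ofReal_ne_zero.mpr (half_pos hε).ne'
    refine ⟨F₀ * g, G₀ * (g + C γ * M), hF₀.mul (zeroFreeOn_X_add_one_pow _), hG₀.mul (hf γ hγ),
      ?_, ?_⟩
    · obtain ⟨k, hk⟩ := hdvd
      exact ⟨g * k - C γ * u * G₀, by linear_combination g * hk⟩
    · rw [show q₁ * (F₀ * g) + q₂ * (G₀ * (g + C γ * M)) =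
          g * (q₁ * F₀ + q₂ * G₀) + C γ * q₂ * G₀ * M by ring, h0, mul_zero, zero_add]
      exact mul_ne_zero (mul_ne_zero (mul_ne_zero (C_ne_zero.mpr hγ₀) hq₂)
        (hG₀.ne_zero rightHalfPlane_nonempty)) hM
  · exact ⟨F₀, G₀, hF₀, hG₀, hdvd, h0⟩

lemma exists_avoiding_two_of_mul_eq {φ₁ φ₂ : RatFunc ℂ} {m Δ₀ F G r s : ℂ[X]} (hm : m ≠ 0)
    (hΔ : φ₂.num * φ₁.denom - φ₁.num * φ₂.denom = m * Δ₀)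
    (hΔ₀ : Δ₀.ZeroFreeOn rightHalfPlane) (hF : F.ZeroFreeOn rightHalfPlane)
    (hG : G.ZeroFreeOn rightHalfPlane) (hr : φ₁.num * F + φ₂.num * G = m * r)
    (hs : φ₁.denom * F + φ₂.denom * G = m * s) (hs₀ : s ≠ 0) :
    ∃ c : RatFunc ℂ, ∀ z ∈ rightHalfPlane,
      c.sphereEval z ≠ φ₁.sphereEval z ∧ c.sphereEval z ≠ φ₂.sphereEval z := by
  have hV₁ : r * φ₁.denom - φ₁.num * s = G * Δ₀ := mul_left_cancel₀ hm <| by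
    linear_combination -φ₁.denom * hr + φ₁.num * hs + G * hΔ
  have hV₂ : r * φ₂.denom - φ₂.num * s = -(F * Δ₀) := mul_left_cancel₀ hm <| by
    linear_combination -φ₂.denom * hr + φ₂.num * hs - F * hΔ
  have hc := (RatFunc.num_mul_eq_mul_denom_iff (p := r) hs₀).mpr rfl
  refine ⟨_, fun z hz => ⟨RatFunc.sphereEval_ne_of_num_mul_eq hc ?_,
    RatFunc.sphereEval_ne_of_num_mul_eq hc ?_⟩⟩
  · rw [hV₁]; exact hG.mul hΔ₀ z hz
  · rw [hV₂, eval_neg, neg_ne_zero]; exact hF.mul hΔ₀ z hz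

lemma exists_dvd_mul_add_and_dvd_mul_add {R : Type*} [CommRing R] {p₁ q₁ : R} (p₂ q₂ : R)
    (h₁ : IsCoprime p₁ q₁) :
    ∃ u : R, p₂ * q₁ - p₁ * q₂ ∣ p₁ * u + p₂ ∧ p₂ * q₁ - p₁ * q₂ ∣ q₁ * u + q₂ := by
  obtain ⟨a, b, hab⟩ := h₁
  exact ⟨-(a * p₂ + b * q₂), ⟨b, by linear_combination -p₂ * hab⟩,
    ⟨-a, by linear_combination -q₂ * hab⟩⟩

lemma dvd_mul_add_mul_of_dvd_sub_mul {R : Type*} [CommRing R] {m F G u p p' : R}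
    (hFG : m ∣ F - u * G) (hp : m ∣ p * u + p') : m ∣ p * F + p' * G := by
  rw [show p * F + p' * G = p * (F - u * G) + (p * u + p') * G by ring]
  exact dvd_add (dvd_mul_of_dvd_right hFG _) (dvd_mul_of_dvd_left hp _)

lemma exists_avoiding_two_of_ne {φ₁ φ₂ : RatFunc ℂ} (hne : φ₁ ≠ φ₂) :
    ∃ c : RatFunc ℂ, ∀ z ∈ rightHalfPlane,
      c.sphereEval z ≠ φ₁.sphereEval z ∧ c.sphereEval z ≠ φ₂.sphereEval z := by
  set Δ := φ₂.num * φ₁.denom - φ₁.num * φ₂.denom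
  have hΔ : Δ ≠ 0 := fun h0 => hne <| by
    rw [← RatFunc.num_div_denom φ₁, eq_comm, ← RatFunc.num_mul_eq_mul_denom_iff φ₁.denom_ne_zero]
    linear_combination h0
  obtain ⟨u, hp, hq⟩ := exists_dvd_mul_add_and_dvd_mul_add φ₂.num φ₂.denom φ₁.isCoprime_num_denom
  obtain ⟨t, Δ₀, ht, hΔ₀, hsplit⟩ := exists_eq_prod_mul_zeroFreeOn hΔ
  have hu : ∀ ζ ∈ t, ζ ∈ rightHalfPlane ∧ u.eval ζ ≠ 0 := by
    intro ζ hζ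
    refine ⟨(ht ζ hζ).1, fun h0 => ?_⟩
    have hp' := eval_eq_zero_of_dvd_of_eval_eq_zero hp (ht ζ hζ).2
    have hq' := eval_eq_zero_of_dvd_of_eval_eq_zero hq (ht ζ hζ).2
    rw [eval_add, eval_mul, h0, mul_zero, zero_add] at hp' hq'
    exact (eval_ne_zero_or_of_isCoprime φ₂.isCoprime_num_denom ζ).elim (· hp') (· hq')
  set m := (t.map fun ζ => X - C ζ).prod
  have hm : m ≠ 0 := (monic_multiset_prod_of_monic _ _ fun ζ _ => monic_X_sub_C ζ).ne_zero
  have hmΔ : m ∣ Δ := ⟨Δ₀, hsplit⟩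
  obtain ⟨F₀, G₀, hF₀, hG₀, hdvd₀⟩ := exists_zeroFreeOn_prod_dvd_sub_mul u t hu
  obtain ⟨F, G, hF, hG, hdvd, hden⟩ :=
    exists_zeroFreeOn_dvd_sub_mul_and_ne_zero (q₁ := φ₁.denom) hm φ₂.denom_ne_zero hF₀ hG₀ hdvd₀
  obtain ⟨r, hr⟩ := dvd_mul_add_mul_of_dvd_sub_mul hdvd (hmΔ.trans hp)
  obtain ⟨s, hs⟩ := dvd_mul_add_mul_of_dvd_sub_mul hdvd (hmΔ.trans hq)
  refine exists_avoiding_two_of_mul_eq hm hsplit hΔ₀ hF hG hr hs ?_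
  rintro rfl
  exact hden (by rw [hs, mul_zero])

/-- Any two rational functions can be simultaneously avoided in the right half-plane by a
(complex) rational function. -/
theorem exists_avoiding_two (φ₁ φ₂ : RatFunc ℂ) :
    ∃ c : RatFunc ℂ, ∀ z : ℂ, 0 < z.re →
      c.sphereEval z ≠ φ₁.sphereEval z ∧ c.sphereEval z ≠ φ₂.sphereEval z := by
  rcases ne_or_eq φ₁ φ₂ with hne | rfl
  · exact exists_avoiding_two_of_ne hne
  · obtain ⟨c, hc⟩ := exists_avoiding_two_of_ne (φ₁ := φ₁) (φ₂ := φ₁ + 1) (by simp)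
    exact ⟨c, fun z hz => ⟨(hc z hz).1, (hc z hz).1⟩⟩
end

section
/- There is no entire function f : ℂ → ℂ such that f(z) ≠ 0 and f(z) ≠ z for every z ∈ ℂ. Equivalently, no function meromorphic in the whole plane ℂ can simultaneously avoid the three rational functions 0, ∞ and z (i.e., have its graph on the Riemann sphere disjoint from the graphs of the constant functions 0 and ∞ and of the identity function). -/
/-!
Let `f` be such an entire function. Then `u z = 1 - z / f z` is entire, never `0`, and equal to
`1` only at `z = 0`, so a logarithm `p` of `u` omits all but one point of `2πiℤ`; by little
Picard `p`, hence `u`, is constant, which is absurd.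

Little Picard is proved through a Bloch-type theorem. If `w` is omitted by an entire `f`, then
`(w - f) / (w - f c)` has a holomorphic square root, and Cauchy's estimate for it bounds
`|f'(c)|` in terms of `|w - f c|` (Landau). Choosing `c` to maximise
`|f'(z)| (R - |z|)` on a disc of radius `R` turns this into: `f(ℂ)` contains discs of radius
`R |f'(0)| / 20` for every `R`, so a nonconstant entire function cannot omit a `3`-dense set.
Finally, if `f` omits `0` and `1`, write `f = exp (2πi F)`; then `F` omits `ℕ`, and
`F = cosh² g` with `g` entire, where `g` omits the `3`-dense set `{w | cosh² w ∈ ℕ}`.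
-/

open Complex Metric Set
open scoped Real

variable {f : ℂ → ℂ}

theorem Differentiable.exists_exp_eq (hf : Differentiable ℂ f) (h0 : ∀ z, f z ≠ 0) :
    ∃ g : ℂ → ℂ, Differentiable ℂ g ∧ ∀ z, cexp (g z) = f z := by
  obtain ⟨g, hg0, hg⟩ := (hf.deriv.div hf h0).isExactOn_univ.with_val_at 0 (Complex.log (f 0))
  have hg' (z : ℂ) : HasDerivAt g (_root_.deriv f z / f z) z := hg z (mem_univ z)
  have hfg : Differentiable ℂ fun w => f w * cexp (-g w) :=
    hf.mul fun w => (hg' w).differentiableAt.neg.cexp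
  have hconst (z : ℂ) : _root_.deriv (fun w => f w * cexp (-g w)) z = 0 := by
    refine ((hf z).hasDerivAt.mul (hg' z).neg.cexp).deriv.trans ?_
    field_simp [h0 z]
    ring
  refine ⟨g, fun z => (hg' z).differentiableAt, fun z => ?_⟩
  have := is_const_of_deriv_eq_zero hfg hconst z 0
  rw [hg0, exp_neg, exp_neg, exp_log (h0 0), mul_inv_cancel₀ (h0 0)] at this
  field_simp at this
  exact this.symm

theorem Differentiable.exists_sq_eq (hf : Differentiable ℂ f) (h0 : ∀ z, f z ≠ 0) :
    ∃ g : ℂ → ℂ, Differentiable ℂ g ∧ ∀ z, g z ^ 2 = f z := by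
  obtain ⟨g, hg, hgf⟩ := hf.exists_exp_eq h0
  refine ⟨fun z => cexp (g z / 2), (hg.div_const 2).cexp, fun z => ?_⟩
  rw [← exp_nat_mul, ← hgf z]
  congr 1
  push_cast
  ring

theorem norm_deriv_mul_sq_le_of_forall_ne (hf : Differentiable ℂ f) {c w : ℂ} {r M : ℝ}
    (hr : 0 < r) (hw : ∀ z, f z ≠ w) (hM : ∀ z ∈ sphere c r, ‖f z - f c‖ ≤ M) :
    (‖deriv f c‖ * r) ^ 2 ≤ 4 * ‖w - f c‖ * (‖w - f c‖ + M) := by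
  set d := ‖w - f c‖
  have hwc : w - f c ≠ 0 := sub_ne_zero.mpr (hw c).symm
  have hd : 0 < d := norm_pos_iff.mpr hwc
  have hM0 : 0 ≤ M := (norm_nonneg _).trans (hM (c + r) (by simp [abs_of_pos hr]))
  obtain ⟨G, hG, hGsq⟩ : ∃ G : ℂ → ℂ, Differentiable ℂ G ∧ ∀ z, G z ^ 2 = (w - f z) / (w - f c) :=
    ((differentiable_const w).sub hf).div_const _ |>.exists_sq_eq
      fun z => div_ne_zero (sub_ne_zero.mpr (hw z).symm) hwc
  have hGbound : ∀ z ∈ sphere c r, ‖G z‖ ≤ √((d + M) / d) := by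
    intro z hz
    rw [Real.le_sqrt (norm_nonneg _) (by positivity), ← norm_pow, hGsq, norm_div,
      le_div_iff₀ hd, div_mul_cancel₀ _ hd.ne']
    calc ‖w - f z‖ = ‖(w - f c) - (f z - f c)‖ := by ring_nf
      _ ≤ d + M := (norm_sub_le _ _).trans (by gcongr; exact hM z hz)
  have hcauchy : ‖deriv G c‖ * r ≤ √((d + M) / d) :=
    (le_div_iff₀ hr).mp (norm_deriv_le_of_forall_mem_sphere_norm_le hr hG.diffContOnCl hGbound)
  have hGc : ‖G c‖ = 1 := by
    rw [← pow_eq_one_iff_of_nonneg (norm_nonneg _) two_ne_zero, ← norm_pow, hGsq, div_self hwc,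
      norm_one]
  have hderiv : 2 * G c * deriv G c = -deriv f c / (w - f c) := by
    have h1 := (hG c).hasDerivAt.pow 2
    have h2 := ((hf c).hasDerivAt.const_sub w).div_const (w - f c)
    rw [show G ^ 2 = fun z => (w - f z) / (w - f c) from funext hGsq] at h1
    simpa [neg_div] using h1.unique h2
  have hnorm : ‖deriv f c‖ = 2 * d * ‖deriv G c‖ := by
    have := congrArg norm hderiv
    rw [norm_mul, norm_mul, hGc, norm_div, norm_neg, Complex.norm_two] at this
    field_simp at this
    linarith
  calc (‖deriv f c‖ * r) ^ 2 = 4 * d ^ 2 * (‖deriv G c‖ * r) ^ 2 := by rw [hnorm]; ring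
    _ ≤ 4 * d ^ 2 * ((d + M) / d) := by
      gcongr
      exact (sq_le_sq₀ (by positivity) (Real.sqrt_nonneg _)).mpr hcauchy |>.trans
        (Real.sq_sqrt (by positivity)).le
    _ = 4 * d * (d + M) := by field_simp

theorem Continuous.exists_le_two_mul_on_closedBall {E : Type*} [NormedAddCommGroup E]
    [ProperSpace E] {g : E → ℝ} (hg : Continuous g) {c : E} (hc : 0 < g c) {R : ℝ} (hR : 0 < R) :
    ∃ p : E, ∃ t > 0, R * g c ≤ 2 * t * g p ∧ ∀ z ∈ closedBall p t, g z ≤ 2 * g p := by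
  -- maximise `g z * (R - dist z c)`, which vanishes on the boundary of `closedBall c R`
  obtain ⟨p, hpR, hmax⟩ := (isCompact_closedBall c R).exists_isMaxOn
    ⟨c, mem_closedBall_self hR.le⟩
    (f := fun z => g z * (R - dist z c)) (by fun_prop)
  have hcp : R * g c ≤ g p * (R - dist p c) := by
    simpa [mul_comm] using hmax (mem_closedBall_self hR.le)
  have hpR' : dist p c < R := by
    by_contra! h
    have : R - dist p c = 0 := by linarith [mem_closedBall.mp hpR]
    rw [this, mul_zero] at hcp
    linarith [mul_pos hR hc]
  have hgp : 0 < g p := pos_of_mul_pos_left (hcp.trans_lt' (by positivity)) (by linarith)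
  refine ⟨p, (R - dist p c) / 2, by linarith, by linarith, fun z hz => ?_⟩
  have hzc : dist z c ≤ dist p c + (R - dist p c) / 2 :=
    (dist_triangle z p c).trans (by linarith [mem_closedBall.mp hz])
  have hKz : g z * (R - dist z c) ≤ g p * (R - dist p c) :=
    hmax (mem_closedBall.mpr (by linarith))
  nlinarith

theorem exists_ball_subset_range (hf : Differentiable ℂ f) (c : ℂ) (R : ℝ) :
    ∃ ζ, ball ζ (R * ‖deriv f c‖ / 20) ⊆ range f := by
  rcases le_or_gt (R * ‖deriv f c‖) 0 with h | h
  · exact ⟨0, by simp [ball_eq_empty.mpr (by linarith : R * ‖deriv f c‖ / 20 ≤ 0)]⟩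
  have hR : 0 < R := pos_of_mul_pos_left h (norm_nonneg _)
  obtain ⟨p, t, ht, hRp, hp⟩ :=
    hf.deriv.continuous.norm.exists_le_two_mul_on_closedBall (pos_of_mul_pos_right h hR.le) hR
  refine ⟨f p, fun w hw => ?_⟩
  by_contra hwf
  have hM : ∀ z ∈ sphere p t, ‖f z - f p‖ ≤ 2 * ‖deriv f p‖ * t := fun z hz => by
    simpa [mem_sphere_iff_norm.mp hz] using
      (convex_closedBall p t).norm_image_sub_le_of_norm_deriv_le (fun x _ => hf x) hp
        (mem_closedBall_self ht.le) (sphere_subset_closedBall hz)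
  -- with `a = ‖f' p‖ * t`, Landau's estimate reads `a² ≤ 4d(d + 2a)`, which forces `d ≥ a / 10`
  have hL := norm_deriv_mul_sq_le_of_forall_ne hf ht (fun z h => hwf ⟨z, h⟩) hM
  rw [mem_ball, dist_eq_norm] at hw
  nlinarith [norm_nonneg (w - f p), norm_nonneg (deriv f p)]

theorem Differentiable.apply_eq_apply_of_forall_not_closedBall_subset_range
    (hf : Differentiable ℂ f) {r : ℝ} (h : ∀ ζ, ¬ closedBall ζ r ⊆ range f) (z w : ℂ) :
    f z = f w := by
  refine is_const_of_deriv_eq_zero hf (fun a => ?_) z w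
  by_contra ha
  obtain ⟨ζ, hζ⟩ := exists_ball_subset_range hf a (20 * (r + 1) / ‖_root_.deriv f a‖)
  rw [div_mul_cancel₀ _ (norm_ne_zero_iff.mpr ha), mul_div_cancel_left₀ _ (by norm_num)] at hζ
  exact h ζ ((closedBall_subset_ball (lt_add_one r)).trans hζ)

theorem Complex.cosh_add_int_mul_pi_mul_I_sq (z : ℂ) (k : ℤ) :
    cosh (z + k * π * I) ^ 2 = cosh z ^ 2 := by
  rw [cosh_add, cosh_mul_I, sinh_mul_I, sin_int_mul_pi, zero_mul, mul_zero, add_zero, mul_pow,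
    cos_sq', sin_int_mul_pi]
  ring

theorem Real.exists_abs_sub_le_one_and_cosh_sq_eq_natCast (x : ℝ) :
    ∃ y, |y - x| ≤ 1 ∧ ∃ n : ℕ, cosh y ^ 2 = n := by
  wlog hx : 0 ≤ x generalizing x
  · obtain ⟨y, hy, n, hn⟩ := this (-x) (by linarith)
    exact ⟨-y, by rwa [← neg_add', abs_neg, ← sub_neg_eq_add], n, by rwa [cosh_neg]⟩
  have hstep : cosh x ^ 2 + 1 ≤ cosh (x + 1) ^ 2 := by
    have h1 : sinh x + 1 ≤ sinh (x + 1) := by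
      rw [sinh_add]
      nlinarith [sinh_nonneg_iff.mpr hx, one_le_cosh x, one_le_cosh 1,
        self_le_sinh_iff.mpr zero_le_one]
    nlinarith [cosh_sq x, cosh_sq (x + 1), sinh_nonneg_iff.mpr hx]
  obtain ⟨y, ⟨hxy, hyx⟩, hy⟩ := intermediate_value_Icc (by linarith : x ≤ x + 1)
    (f := fun y => cosh y ^ 2) (by fun_prop)
    ⟨Nat.le_ceil (cosh x ^ 2), (Nat.ceil_lt_add_one (by positivity)).le.trans hstep⟩
  exact ⟨y, abs_le.mpr ⟨by linarith, by linarith⟩, _, hy⟩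

theorem Complex.exists_mem_closedBall_cosh_sq_eq_natCast (ζ : ℂ) :
    ∃ w ∈ closedBall ζ 3, ∃ n : ℕ, cosh w ^ 2 = n := by
  obtain ⟨y, hy, n, hn⟩ := Real.exists_abs_sub_le_one_and_cosh_sq_eq_natCast ζ.re
  set k := round (ζ.im / π)
  have hk : |k * π - ζ.im| ≤ π / 2 := by
    have := abs_sub_round (ζ.im / π)
    rw [abs_sub_comm] at this
    rw [show k * π - ζ.im = (k - ζ.im / π) * π by field_simp, abs_mul, abs_of_pos Real.pi_pos]
    nlinarith [Real.pi_pos]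
  refine ⟨y + k * π * I, ?_, n, ?_⟩
  · rw [mem_closedBall, dist_eq_norm]
    calc ‖y + k * π * I - ζ‖ ≤ |(y + k * π * I - ζ).re| + |(y + k * π * I - ζ).im| :=
          norm_le_abs_re_add_abs_im _
      _ = |y - ζ.re| + |k * π - ζ.im| := by simp
      _ ≤ 1 + π / 2 := add_le_add hy hk
      _ ≤ 3 := by linarith [Real.pi_le_four]
  · rw [cosh_add_int_mul_pi_mul_I_sq, ← ofReal_cosh, ← ofReal_pow, hn, ofReal_natCast]

theorem Differentiable.exists_cosh_sq_eq (hf : Differentiable ℂ f) (h0 : ∀ z, f z ≠ 0)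
    (h1 : ∀ z, f z ≠ 1) : ∃ g : ℂ → ℂ, Differentiable ℂ g ∧ ∀ z, Complex.cosh (g z) ^ 2 = f z := by
  obtain ⟨g₁, hg₁, hg₁f⟩ := hf.exists_sq_eq h0
  obtain ⟨g₂, hg₂, hg₂f⟩ := (hf.sub_const 1).exists_sq_eq fun z => sub_ne_zero.mpr (h1 z)
  have hinv (z : ℂ) : (g₁ z - g₂ z) * (g₁ z + g₂ z) = 1 := by
    linear_combination hg₁f z - hg₂f z
  obtain ⟨g, hg, hgg⟩ := (hg₁.sub hg₂).exists_exp_eq fun z => left_ne_zero_of_mul_eq_one (hinv z)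
  refine ⟨g, hg, fun z => ?_⟩
  have hcosh : 2 * Complex.cosh (g z) = 2 * g₁ z := by
    rw [two_cosh, exp_neg, hgg, Pi.sub_apply, inv_eq_of_mul_eq_one_right (hinv z)]
    ring
  rw [mul_left_cancel₀ two_ne_zero hcosh, hg₁f]

theorem Differentiable.apply_eq_apply_of_forall_ne_natCast (hf : Differentiable ℂ f)
    (h : ∀ z (n : ℕ), f z ≠ n) (z w : ℂ) : f z = f w := by
  obtain ⟨g, hg, hgf⟩ := hf.exists_cosh_sq_eq (by simpa using (h · 0)) (by simpa using (h · 1))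
  have hgc := hg.apply_eq_apply_of_forall_not_closedBall_subset_range (r := 3) fun ζ hζ => by
    obtain ⟨v, hv, n, hn⟩ := exists_mem_closedBall_cosh_sq_eq_natCast ζ
    obtain ⟨x, rfl⟩ := hζ hv
    exact h x n (by rw [← hgf, hn])
  rw [← hgf, ← hgf, hgc z w]

theorem Differentiable.apply_eq_apply_of_forall_ne_zero_of_forall_ne_one
    (hf : Differentiable ℂ f) (h0 : ∀ z, f z ≠ 0) (h1 : ∀ z, f z ≠ 1) (z w : ℂ) : f z = f w := by
  obtain ⟨g, hg, hgf⟩ := hf.exists_exp_eq h0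
  have hgc := (hg.div_const (2 * π * I)).apply_eq_apply_of_forall_ne_natCast (fun x n hn => h1 x
    (by rw [← hgf, (div_eq_iff two_pi_I_ne_zero).mp hn]; exact_mod_cast exp_int_mul_two_pi_mul_I n))
    z w
  rw [← hgf, ← hgf, div_left_inj' two_pi_I_ne_zero |>.mp hgc]

theorem Differentiable.apply_eq_apply_of_forall_ne (hf : Differentiable ℂ f) {a b : ℂ}
    (hab : a ≠ b) (ha : ∀ z, f z ≠ a) (hb : ∀ z, f z ≠ b) (z w : ℂ) : f z = f w := by
  have hba : b - a ≠ 0 := sub_ne_zero.mpr hab.symm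
  have := ((hf.sub_const a).div_const (b - a)).apply_eq_apply_of_forall_ne_zero_of_forall_ne_one
    (fun x => div_ne_zero (sub_ne_zero.mpr (ha x)) hba)
    (fun x => by rw [Ne, div_eq_one_iff_eq hba, sub_left_inj]; exact hb x) z w
  simpa [div_left_inj' hba] using this

/-- No entire function can avoid both the constant `0` and the identity function `z`:
a meromorphic function in the plane cannot simultaneously avoid the three rational
functions `0`, `∞` and `z`. -/
theorem no_entire_avoids_zero_and_id :
    ¬ ∃ f : ℂ → ℂ, Differentiable ℂ f ∧ ∀ z : ℂ, f z ≠ 0 ∧ f z ≠ z := by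
  rintro ⟨f, hf, hfz⟩
  set u : ℂ → ℂ := fun z => 1 - z / f z
  have hu : Differentiable ℂ u :=
    (differentiable_const 1).sub (differentiable_id.div hf fun z => (hfz z).1)
  have hu0 (z : ℂ) : u z ≠ 0 := by
    simpa [u, sub_eq_zero, eq_div_iff (hfz z).1] using (hfz z).2
  have hu1 (z : ℂ) : u z = 1 ↔ z = 0 := by simp [u, (hfz z).1]
  obtain ⟨p, hp, hpu⟩ := hu.exists_exp_eq hu0
  obtain ⟨k, hk⟩ := exp_eq_one_iff.mp ((hpu 0).trans ((hu1 0).mpr rfl))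
  -- `p` meets `2πiℤ` only at `0`, where it takes the value `2πik`
  have hp_ne (m : ℤ) (hm : m ≠ k) (z : ℂ) : p z ≠ m * (2 * π * I) := fun hz => by
    obtain rfl : z = 0 := (hu1 z).mp (by rw [← hpu, hz, exp_int_mul_two_pi_mul_I])
    exact hm (by exact_mod_cast mul_right_cancel₀ two_pi_I_ne_zero (hz.symm.trans hk))
  have hpc := hp.apply_eq_apply_of_forall_ne (by simp) (hp_ne (k + 1) (by omega))
    (hp_ne (k + 2) (by omega)) 1 0
  exact one_ne_zero ((hu1 1).mp (by rw [← hpu, hpc, hpu, (hu1 0).mpr rfl]))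
end
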